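/- Let S be a distributive subalgebra of RCC5 and let Γ = {v_i R_ij v_j : 1 ≤ i,j ≤ n} be a path-consistent RCC5 network over S. Then Γ is weakly globally consistent: for every nonempty subset V′ of its variables, every consistent scenario of the restriction of Γ to V′ can be extended to a consistent scenario of Γ. -/

import Mathlib

/-- A *region* is a nonempty regular closed subset of the Euclidean plane `ℝ × ℝ`. -/
def Region : Type :=
  {x : Set (ℝ × ℝ) // x.Nonempty ∧ x = closure (interior x)}

namespace Region

/-- Part-of: `x P y` iff `x ⊆ y`. -/
def P (x y : Region) : Prop := x.1 ⊆ y.1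

/-- Overlap: `x O y` iff some region is a common part of `x` and `y`. -/
def O (x y : Region) : Prop := ∃ z : Region, z.1 ⊆ x.1 ∧ z.1 ⊆ y.1

/-- Connection: `x C y` iff `x ∩ y ≠ ∅`. -/
def C (x y : Region) : Prop := (x.1 ∩ y.1).Nonempty

end Region

/-- The five basic RCC5 relations. -/
inductive RCC5Basic : Type
  | DR | PO | PP | PPi | EQ
deriving DecidableEq

namespace RCC5Basic

/-- Interpretation of the basic RCC5 relations on regions. -/
def interp : RCC5Basic → Region → Region → Prop
  | DR, x, y => ¬ Region.O x y
  | PO, x, y => Region.O x y ∧ ¬ x.1 ⊆ y.1 ∧ ¬ y.1 ⊆ x.1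
  | PP, x, y => x.1 ⊆ y.1 ∧ x ≠ y
  | PPi, x, y => y.1 ⊆ x.1 ∧ x ≠ y
  | EQ, x, y => x = y

/-- Converse of a basic RCC5 relation. -/
def conv : RCC5Basic → RCC5Basic
  | DR => DR | PO => PO | PP => PPi | PPi => PP | EQ => EQ

end RCC5Basic

/-- An RCC5 relation is a union of basic relations, identified with a subset of `B₅`. -/
abbrev RCC5Rel : Type := Set RCC5Basic

namespace RCC5Rel

/-- A pair of regions is an instance of an RCC5 relation iff it is an instance of one of
its basic relations. -/
def interp (R : RCC5Rel) (x y : Region) : Prop := ∃ b ∈ R, RCC5Basic.interp b x y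

/-- Converse of an RCC5 relation. -/
def conv (R : RCC5Rel) : RCC5Rel := {b | RCC5Basic.conv b ∈ R}

/-- Weak composition: `γ ∈ R ⋄ S` iff `γ` intersects the relational composition `R ∘ S`. -/
def comp (R S : RCC5Rel) : RCC5Rel :=
  {γ | ∃ x z : Region, RCC5Basic.interp γ x z ∧
        ∃ y : Region, RCC5Rel.interp R x y ∧ RCC5Rel.interp S y z}

lemma conv_univ : RCC5Rel.conv Set.univ = Set.univ := by
  ext b; simp [RCC5Rel.conv]

end RCC5Rel

/-- A distributive subalgebra of RCC5: contains all basic relations, is closed under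
converse, weak composition and (nonempty) intersection, and weak composition distributes
over nonempty intersections. -/
def IsDistributiveSubalgebra (𝒮 : Set RCC5Rel) : Prop :=
  (∀ b : RCC5Basic, ({b} : RCC5Rel) ∈ 𝒮) ∧
  (∀ R ∈ 𝒮, RCC5Rel.conv R ∈ 𝒮) ∧
  (∀ R ∈ 𝒮, ∀ S ∈ 𝒮, RCC5Rel.comp R S ∈ 𝒮) ∧
  (∀ R ∈ 𝒮, ∀ S ∈ 𝒮, (R ∩ S).Nonempty → R ∩ S ∈ 𝒮) ∧
  (∀ R ∈ 𝒮, ∀ T₁ ∈ 𝒮, ∀ T₂ ∈ 𝒮, (T₁ ∩ T₂).Nonempty →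
    RCC5Rel.comp R (T₁ ∩ T₂) = RCC5Rel.comp R T₁ ∩ RCC5Rel.comp R T₂ ∧
    RCC5Rel.comp (T₁ ∩ T₂) R = RCC5Rel.comp T₁ R ∩ RCC5Rel.comp T₂ R)

/-- An RCC5 (constraint) network on `n` variables. -/
structure RCC5Network (n : ℕ) where
  rel : Fin n → Fin n → RCC5Rel
  conv_rel : ∀ i j, rel j i = RCC5Rel.conv (rel i j)
  diag : ∀ i, rel i i = {RCC5Basic.EQ}

namespace RCC5Network

variable {n : ℕ}

/-- A solution of a network assigns regions to the variables satisfying all constraints. -/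
def IsSolution (Γ : RCC5Network n) (a : Fin n → Region) : Prop :=
  ∀ i j, RCC5Rel.interp (Γ.rel i j) (a i) (a j)

/-- A network is consistent if it has a solution. -/
def Consistent (Γ : RCC5Network n) : Prop := ∃ a, Γ.IsSolution a

/-- `Γ` entails the constraint `(v_i S v_j)`. -/
def Entails (Γ : RCC5Network n) (i j : Fin n) (S : RCC5Rel) : Prop :=
  ∀ a, Γ.IsSolution a → RCC5Rel.interp S (a i) (a j)

/-- All-different: consistent and no two distinct variables are forced to be equal. -/
def AllDifferent (Γ : RCC5Network n) : Prop :=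
  Γ.Consistent ∧ ∀ i j, i ≠ j → ¬ Γ.Entails i j {RCC5Basic.EQ}

/-- Path-consistency. -/
def PathConsistent (Γ : RCC5Network n) : Prop :=
  ∀ i j k, (Γ.rel i j).Nonempty ∧ Γ.rel i j ⊆ RCC5Rel.comp (Γ.rel i k) (Γ.rel k j)

/-- The network is over the subclass `𝒮`. -/
def Over (Γ : RCC5Network n) (𝒮 : Set RCC5Rel) : Prop := ∀ i j, Γ.rel i j ∈ 𝒮

/-- `Γ'` refines `Γ`. -/
def Refines (Γ' Γ : RCC5Network n) : Prop := ∀ i j, Γ'.rel i j ⊆ Γ.rel i j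

/-- `Γp` is the a-closure of `Γ`: the pointwise-largest path-consistent refinement. -/
def IsAClosure (Γp Γ : RCC5Network n) : Prop :=
  Γp.PathConsistent ∧ Γp.Refines Γ ∧
    ∀ Γ' : RCC5Network n, Γ'.PathConsistent → Γ'.Refines Γ → Γ'.Refines Γp

/-- A scenario of (the restriction of) `Γ` on the variable set `V`. -/
def IsScenarioOn (Γ : RCC5Network n) (V : Set (Fin n)) (s : Fin n → Fin n → RCC5Basic) : Prop :=
  (∀ i ∈ V, ∀ j ∈ V, s i j ∈ Γ.rel i j) ∧
  (∀ i ∈ V, ∀ j ∈ V, s j i = RCC5Basic.conv (s i j)) ∧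
  (∀ i ∈ V, s i i = RCC5Basic.EQ)

/-- Consistency of a scenario on a variable set `V`. -/
def ScenarioConsistentOn (V : Set (Fin n)) (s : Fin n → Fin n → RCC5Basic) : Prop :=
  ∃ a : Fin n → Region, ∀ i ∈ V, ∀ j ∈ V, RCC5Basic.interp (s i j) (a i) (a j)

/-- Weakly globally consistent: every consistent scenario of a restriction of `Γ` extends
to a consistent scenario of `Γ`. -/
def WeaklyGloballyConsistent (Γ : RCC5Network n) : Prop :=
  ∀ V : Set (Fin n), V.Nonempty → ∀ s, Γ.IsScenarioOn V s → ScenarioConsistentOn V s →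
    ∃ s', Γ.IsScenarioOn Set.univ s' ∧ ScenarioConsistentOn Set.univ s' ∧
      ∀ i ∈ V, ∀ j ∈ V, s' i j = s i j

/-- Minimality: every basic relation in every constraint is feasible. -/
def Minimal (Γ : RCC5Network n) : Prop :=
  ∀ i j, i ≠ j → ∀ α ∈ Γ.rel i j,
    ∃ a, Γ.IsSolution a ∧ RCC5Basic.interp α (a i) (a j)

/-- Weak composition `CT` along a path `u :: l` of variables. -/
def pathCT (Γ : RCC5Network n) : Fin n → List (Fin n) → RCC5Rel
  | _, [] => Set.univ
  | u, [v] => Γ.rel u v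
  | u, v :: w :: rest => RCC5Rel.comp (Γ.rel u v) (pathCT Γ v (w :: rest))

/-- The network obtained from `Γ` by replacing the constraints between `v_i` and `v_j`
(`i ≠ j`) by the universal relation. -/
def removeEdge (Γ : RCC5Network n) (i j : Fin n) : RCC5Network n where
  rel a b := if i ≠ j ∧ ((a = i ∧ b = j) ∨ (a = j ∧ b = i)) then Set.univ else Γ.rel a b
  conv_rel a b := by
    by_cases h : i ≠ j ∧ ((a = i ∧ b = j) ∨ (a = j ∧ b = i))
    · have h' : i ≠ j ∧ ((b = i ∧ a = j) ∨ (b = j ∧ a = i)) := by tauto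
      simp only [if_pos h, if_pos h', RCC5Rel.conv_univ]
    · have h' : ¬(i ≠ j ∧ ((b = i ∧ a = j) ∨ (b = j ∧ a = i))) := by tauto
      simp only [if_neg h, if_neg h']
      exact Γ.conv_rel a b
  diag a := by
    have h : ¬(i ≠ j ∧ ((a = i ∧ a = j) ∨ (a = j ∧ a = i))) := by
      rintro ⟨hij, ⟨h1, h2⟩ | ⟨h1, h2⟩⟩
      · exact hij (h1.symm.trans h2)
      · exact hij (h2.symm.trans h1)
    simp only [if_neg h]
    exact Γ.diag a

/-- A constraint `(v_i R_ij v_j)` is redundant in `Γ` if the network obtained by replacing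
it (and its converse) with the universal relation entails it. -/
def Redundant (Γ : RCC5Network n) (i j : Fin n) : Prop :=
  (Γ.removeEdge i j).Entails i j (Γ.rel i j)

open Classical in
/-- The core of `Γ`: every redundant constraint (and its converse) is replaced by the
universal relation. -/
noncomputable def core (Γ : RCC5Network n) : RCC5Network n where
  rel a b := if a ≠ b ∧ (Γ.Redundant a b ∨ Γ.Redundant b a) then Set.univ else Γ.rel a b
  conv_rel a b := by
    by_cases h : a ≠ b ∧ (Γ.Redundant a b ∨ Γ.Redundant b a)
    · have h' : b ≠ a ∧ (Γ.Redundant b a ∨ Γ.Redundant a b) := ⟨h.1.symm, h.2.symm⟩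
      simp only [if_pos h, if_pos h', RCC5Rel.conv_univ]
    · have h' : ¬(b ≠ a ∧ (Γ.Redundant b a ∨ Γ.Redundant a b)) := by
        intro hc; exact h ⟨hc.1.symm, hc.2.symm⟩
      simp only [if_neg h, if_neg h']
      exact Γ.conv_rel a b
  diag a := by
    have h : ¬(a ≠ a ∧ (Γ.Redundant a a ∨ Γ.Redundant a a)) := fun hc => hc.1 rfl
    simp only [if_neg h]
    exact Γ.diag a

end RCC5Network

/-- A path from `i` to `j` in a network on `n` variables: a nonempty list `l` of successive
vertices (so the path is `i :: l`), with consecutive vertices distinct, ending at `j`. -/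
def IsPathFrom {n : ℕ} (i j : Fin n) (l : List (Fin n)) : Prop :=
  l ≠ [] ∧ l.getLast? = some j ∧ List.Chain (· ≠ ·) i l

/-- The path `u :: l` never traverses the edge `{i, j}` (in either direction). -/
def AvoidsEdge {n : ℕ} (i j : Fin n) (u : Fin n) (l : List (Fin n)) : Prop :=
  List.Chain (fun a b => ¬(a = i ∧ b = j) ∧ ¬(a = j ∧ b = i)) u l

namespace WGC
open RCC5Basic Metric Set

instance : Fintype RCC5Basic :=
  ⟨⟨{.DR,.PO,.PP,.PPi,.EQ}, by decide⟩, fun x => by cases x <;> decide⟩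

lemma conv_conv (b : RCC5Basic) : b.conv.conv = b := by cases b <;> rfl

lemma region_eq {x y : Region} (h1 : x.1 ⊆ y.1) (h2 : y.1 ⊆ x.1) : x = y :=
  Subtype.ext (Set.Subset.antisymm h1 h2)

lemma O_of_sub {x y : Region} (h : x.1 ⊆ y.1) : Region.O x y := ⟨x, subset_rfl, h⟩

lemma O_symm {x y : Region} (h : Region.O x y) : Region.O y x := by
  obtain ⟨z, h1, h2⟩ := h; exact ⟨z, h2, h1⟩

lemma O_self (x : Region) : Region.O x x := O_of_sub subset_rfl

lemma O_mono {x y x' y' : Region} (hx : x.1 ⊆ x'.1) (hy : y.1 ⊆ y'.1)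
    (h : Region.O x y) : Region.O x' y' := by
  obtain ⟨z, h1, h2⟩ := h; exact ⟨z, h1.trans hx, h2.trans hy⟩

open Classical in
/-- The basic relation that actually holds between two regions. -/
noncomputable def basicOf (x y : Region) : RCC5Basic :=
  if x = y then .EQ else if x.1 ⊆ y.1 then .PP else if y.1 ⊆ x.1 then .PPi
  else if Region.O x y then .PO else .DR

lemma basicOf_interp (x y : Region) : (basicOf x y).interp x y := by
  unfold basicOf
  split_ifs with h1 h2 h3 h4
  · exact h1
  · exact ⟨h2, h1⟩
  · exact ⟨h3, h1⟩
  · exact ⟨h4, h2, h3⟩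
  · exact h4

lemma interp_unique {b c : RCC5Basic} {x y : Region} (hb : b.interp x y)
    (hc : c.interp x y) : b = c := by
  cases b <;> cases c <;> simp only [RCC5Basic.interp] at hb hc
  · rfl
  · exact (hb hc.1).elim
  · exact (hb (O_of_sub hc.1)).elim
  · exact (hb (O_symm (O_of_sub hc.1))).elim
  · exact (hb (by rw [hc]; exact O_self y)).elim
  · exact (hc hb.1).elim
  · rfl
  · exact (hb.2.1 hc.1).elim
  · exact (hb.2.2 hc.1).elim
  · exact (hb.2.1 (by rw [hc])).elim
  · exact (hc (O_of_sub hb.1)).elim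
  · exact (hc.2.1 hb.1).elim
  · rfl
  · exact (hb.2 (region_eq hb.1 hc.1)).elim
  · exact (hb.2 hc).elim
  · exact (hc (O_symm (O_of_sub hb.1))).elim
  · exact (hc.2.2 hb.1).elim
  · exact (hb.2 (region_eq hc.1 hb.1)).elim
  · rfl
  · exact (hb.2 hc).elim
  · exact (hc (by rw [hb]; exact O_self y)).elim
  · exact (hc.2.1 (by rw [hb])).elim
  · exact (hc.2 hb).elim
  · exact (hc.2 hb).elim
  · rfl

lemma interp_conv {b : RCC5Basic} {x y : Region} (h : b.interp x y) :
    b.conv.interp y x := by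
  cases b <;> simp only [RCC5Basic.interp, RCC5Basic.conv] at *
  · exact fun hc => h (O_symm hc)
  · exact ⟨O_symm h.1, h.2.2, h.2.1⟩
  · exact ⟨h.1, Ne.symm h.2⟩
  · exact ⟨h.1, Ne.symm h.2⟩
  · exact h.symm

/-! ### Disk models -/

noncomputable def ctr (i : ℕ) : ℝ × ℝ := ((3 * i : ℝ), 0)

lemma dist_ctr {i j : ℕ} (h : i ≠ j) : 3 ≤ dist (ctr i) (ctr j) := by
  have h2 : dist (ctr i) (ctr j) = |(3 * i : ℝ) - 3 * j| := by
    simp [ctr, Prod.dist_eq, Real.dist_eq]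
  rw [h2]
  have h3 : (1 : ℝ) ≤ |(i : ℝ) - (j : ℝ)| := by
    have : ((i : ℤ)) ≠ (j : ℤ) := by exact_mod_cast h
    have := Int.one_le_abs (sub_ne_zero.mpr this)
    calc (1:ℝ) ≤ |((i:ℤ) - (j:ℤ) : ℤ)| := by exact_mod_cast this
      _ = |(i : ℝ) - (j : ℝ)| := by push_cast; rfl
  calc (3:ℝ) = 3 * 1 := by ring
    _ ≤ 3 * |(i : ℝ) - (j : ℝ)| := by linarith
    _ = |(3 * i : ℝ) - 3 * j| := by
        rw [show (3 * i : ℝ) - 3 * j = 3 * ((i:ℝ) - j) by ring, abs_mul,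
          abs_of_nonneg (by norm_num : (0:ℝ) ≤ 3)]

lemma ball_disj {i j : ℕ} (h : i ≠ j) {p : ℝ × ℝ}
    (hi : p ∈ closedBall (ctr i) 1) (hj : p ∈ closedBall (ctr j) 1) : False := by
  have := dist_ctr h
  have h2 : dist (ctr i) (ctr j) ≤ 2 := by
    calc dist (ctr i) (ctr j) ≤ dist (ctr i) p + dist p (ctr j) := dist_triangle _ _ _
      _ ≤ 1 + 1 := by
          rw [mem_closedBall] at hi hj
          rw [dist_comm (ctr i) p]
          linarith
      _ = 2 := by norm_num
  linarith

noncomputable def regionOf (S : Finset ℕ) : Set (ℝ × ℝ) :=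
  ⋃ i ∈ S, closedBall (ctr i) 1

lemma isClosed_regionOf (S : Finset ℕ) : IsClosed (regionOf S) :=
  S.finite_toSet.isClosed_biUnion (fun i _ => isClosed_closedBall)

lemma regular_regionOf (S : Finset ℕ) : regionOf S = closure (interior (regionOf S)) := by
  apply Set.Subset.antisymm
  · intro p hp
    rw [regionOf, Set.mem_iUnion₂] at hp
    obtain ⟨i, hi, hpi⟩ := hp
    have h1 : closedBall (ctr i) 1 = closure (ball (ctr i) 1) :=
      (closure_ball (ctr i) one_ne_zero).symm
    have h2 : ball (ctr i) 1 ⊆ interior (regionOf S) := by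
      apply interior_maximal _ isOpen_ball
      exact (ball_subset_closedBall).trans (Set.subset_biUnion_of_mem (u := fun i => closedBall (ctr i) 1) hi)
    exact closure_mono h2 (h1 ▸ hpi)
  · exact closure_minimal interior_subset (isClosed_regionOf S)

lemma ctr_mem_regionOf {i : ℕ} {S : Finset ℕ} (h : i ∈ S) : ctr i ∈ regionOf S := by
  rw [regionOf, Set.mem_iUnion₂]
  exact ⟨i, h, mem_closedBall_self (by norm_num)⟩

noncomputable def mkR (S : Finset ℕ) (hS : S.Nonempty) : Region :=
  ⟨regionOf S, ⟨ctr hS.choose, ctr_mem_regionOf hS.choose_spec⟩, regular_regionOf S⟩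

lemma regionOf_sub_iff {S T : Finset ℕ} : regionOf S ⊆ regionOf T ↔ S ⊆ T := by
  constructor
  · intro h i hi
    have := h (ctr_mem_regionOf hi)
    rw [regionOf, Set.mem_iUnion₂] at this
    obtain ⟨j, hj, hij⟩ := this
    by_cases hij' : i = j
    · exact hij' ▸ hj
    · exact absurd (ball_disj hij' (mem_closedBall_self (by norm_num)) hij) not_false
  · intro h
    exact Set.biUnion_subset_biUnion_left h

lemma regionOf_inter {S T : Finset ℕ} :
    (regionOf S ∩ regionOf T).Nonempty ↔ (S ∩ T).Nonempty := by
  constructor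
  · rintro ⟨p, hpS, hpT⟩
    rw [regionOf, Set.mem_iUnion₂] at hpS hpT
    obtain ⟨i, hi, hpi⟩ := hpS
    obtain ⟨j, hj, hpj⟩ := hpT
    by_cases hij : i = j
    · exact ⟨i, Finset.mem_inter.mpr ⟨hi, hij ▸ hj⟩⟩
    · exact absurd (ball_disj hij hpi hpj) not_false
  · rintro ⟨i, hi⟩
    rw [Finset.mem_inter] at hi
    exact ⟨ctr i, ctr_mem_regionOf hi.1, ctr_mem_regionOf hi.2⟩

lemma mkR_sub_iff {S T : Finset ℕ} {hS hT} : (mkR S hS).1 ⊆ (mkR T hT).1 ↔ S ⊆ T :=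
  regionOf_sub_iff

lemma mkR_eq_iff {S T : Finset ℕ} {hS hT} : mkR S hS = mkR T hT ↔ S = T := by
  constructor
  · intro h
    have h1 : regionOf S = regionOf T := congrArg Subtype.val h
    exact Finset.Subset.antisymm (regionOf_sub_iff.mp h1.le) (regionOf_sub_iff.mp h1.ge)
  · intro h; subst h; rfl

lemma mkR_O_iff {S T : Finset ℕ} {hS hT} : Region.O (mkR S hS) (mkR T hT) ↔ (S ∩ T).Nonempty := by
  constructor
  · rintro ⟨z, h1, h2⟩
    apply regionOf_inter.mp
    obtain ⟨p, hp⟩ := z.2.1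
    exact ⟨p, h1 hp, h2 hp⟩
  · rintro ⟨i, hi⟩
    rw [Finset.mem_inter] at hi
    refine ⟨mkR {i} ⟨i, Finset.mem_singleton_self i⟩, ?_, ?_⟩ <;>
      · apply regionOf_sub_iff.mpr; simp [Finset.singleton_subset_iff]; tauto

def srel {α : Type*} [DecidableEq α] (S T : Finset α) : RCC5Basic :=
  if S = T then .EQ else if S ⊆ T then .PP else if T ⊆ S then .PPi
  else if (S ∩ T).Nonempty then .PO else .DR

lemma srel_interp (S T : Finset ℕ) (hS : S.Nonempty) (hT : T.Nonempty) :
    (srel S T).interp (mkR S hS) (mkR T hT) := by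
  unfold srel
  split_ifs with h1 h2 h3 h4
  · exact mkR_eq_iff.mpr h1
  · exact ⟨mkR_sub_iff.mpr h2, fun hc => h1 (mkR_eq_iff.mp hc)⟩
  · exact ⟨mkR_sub_iff.mpr h3, fun hc => h1 (mkR_eq_iff.mp hc)⟩
  · exact ⟨mkR_O_iff.mpr h4, fun hc => h2 (mkR_sub_iff.mp hc), fun hc => h3 (mkR_sub_iff.mp hc)⟩
  · intro hc
    exact h4 (mkR_O_iff.mp hc)

lemma srel_map {α : Type*} [DecidableEq α] (e : α ↪ ℕ) (S T : Finset α) :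
    srel (S.map e) (T.map e) = srel S T := by
  unfold srel
  rw [← Finset.map_inter]
  simp only [Finset.map_inj, Finset.map_subset_map, Finset.map_nonempty]

end WGC
namespace WGC
open RCC5Basic

def tab : RCC5Basic → RCC5Basic → Finset RCC5Basic
  | .DR, .DR => {.DR,.PO,.PP,.PPi,.EQ}
  | .DR, .PO => {.DR,.PO,.PP}
  | .DR, .PP => {.DR,.PO,.PP}
  | .DR, .PPi => {.DR}
  | .DR, .EQ => {.DR}
  | .PO, .DR => {.DR,.PO,.PPi}
  | .PO, .PO => {.DR,.PO,.PP,.PPi,.EQ}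
  | .PO, .PP => {.PO,.PP}
  | .PO, .PPi => {.DR,.PO,.PPi}
  | .PO, .EQ => {.PO}
  | .PP, .DR => {.DR}
  | .PP, .PO => {.DR,.PO,.PP}
  | .PP, .PP => {.PP}
  | .PP, .PPi => {.DR,.PO,.PP,.PPi,.EQ}
  | .PP, .EQ => {.PP}
  | .PPi, .DR => {.DR,.PO,.PPi}
  | .PPi, .PO => {.PO,.PPi}
  | .PPi, .PP => {.PO,.PP,.PPi,.EQ}
  | .PPi, .PPi => {.PPi}
  | .PPi, .EQ => {.PPi}
  | .EQ, b => {b}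

def wit : RCC5Basic → RCC5Basic → RCC5Basic → Finset (Fin 4) × Finset (Fin 4) × Finset (Fin 4)
  | .DR, .DR, .DR => ({0}, {1}, {2})
  | .DR, .DR, .EQ => ({0}, {1}, {0})
  | .DR, .DR, .PO => ({0,1}, {2}, {0,3})
  | .DR, .DR, .PP => ({0}, {1}, {0,2})
  | .DR, .DR, .PPi => ({0,1}, {2}, {0})
  | .DR, .EQ, .DR => ({0}, {1}, {1})
  | .DR, .PO, .DR => ({0}, {1,2}, {1,3})
  | .DR, .PO, .PO => ({0,1}, {2,3}, {0,2})
  | .DR, .PO, .PP => ({0}, {1,2}, {0,1})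
  | .DR, .PP, .DR => ({0}, {1}, {1,2})
  | .DR, .PP, .PO => ({0,1}, {2}, {0,2})
  | .DR, .PP, .PP => ({0}, {1}, {0,1})
  | .DR, .PPi, .DR => ({0}, {1,2}, {1})
  | .EQ, .DR, .DR => ({0}, {0}, {1})
  | .EQ, .EQ, .EQ => ({0}, {0}, {0})
  | .EQ, .PO, .PO => ({0,1}, {0,1}, {0,2})
  | .EQ, .PP, .PP => ({0}, {0}, {0,1})
  | .EQ, .PPi, .PPi => ({0,1}, {0,1}, {0})
  | .PO, .DR, .DR => ({0,1}, {0,2}, {3})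
  | .PO, .DR, .PO => ({0,1}, {0,2}, {1,3})
  | .PO, .DR, .PPi => ({0,1}, {0,2}, {1})
  | .PO, .EQ, .PO => ({0,1}, {0,2}, {0,2})
  | .PO, .PO, .DR => ({0,1}, {0,2}, {2,3})
  | .PO, .PO, .EQ => ({0,1}, {0,2}, {0,1})
  | .PO, .PO, .PO => ({0,1}, {0,2}, {0,3})
  | .PO, .PO, .PP => ({0,1}, {0,2}, {0,1,3})
  | .PO, .PO, .PPi => ({0,1,2}, {0,3}, {0,1})
  | .PO, .PP, .PO => ({0,1}, {0,2}, {0,2,3})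
  | .PO, .PP, .PP => ({0,1}, {0,2}, {0,1,2})
  | .PO, .PPi, .DR => ({0,1}, {0,2}, {2})
  | .PO, .PPi, .PO => ({0,1}, {0,2,3}, {0,2})
  | .PO, .PPi, .PPi => ({0,1}, {0,2}, {0})
  | .PP, .DR, .DR => ({0}, {0,1}, {2})
  | .PP, .EQ, .PP => ({0}, {0,1}, {0,1})
  | .PP, .PO, .DR => ({0}, {0,1}, {1,2})
  | .PP, .PO, .PO => ({0,1}, {0,1,2}, {0,3})
  | .PP, .PO, .PP => ({0}, {0,1}, {0,2})
  | .PP, .PP, .PP => ({0}, {0,1}, {0,1,2})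
  | .PP, .PPi, .DR => ({0}, {0,1}, {1})
  | .PP, .PPi, .EQ => ({0}, {0,1}, {0})
  | .PP, .PPi, .PO => ({0,1}, {0,1,2}, {0,2})
  | .PP, .PPi, .PP => ({0}, {0,1,2}, {0,1})
  | .PP, .PPi, .PPi => ({0,1}, {0,1,2}, {0})
  | .PPi, .DR, .DR => ({0,1}, {0}, {2})
  | .PPi, .DR, .PO => ({0,1}, {0}, {1,2})
  | .PPi, .DR, .PPi => ({0,1}, {0}, {1})
  | .PPi, .EQ, .PPi => ({0,1}, {0}, {0})
  | .PPi, .PO, .PO => ({0,1,2}, {0,1}, {0,3})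
  | .PPi, .PO, .PPi => ({0,1,2}, {0,1}, {0,2})
  | .PPi, .PP, .EQ => ({0,1}, {0}, {0,1})
  | .PPi, .PP, .PO => ({0,1}, {0}, {0,2})
  | .PPi, .PP, .PP => ({0,1}, {0}, {0,1,2})
  | .PPi, .PP, .PPi => ({0,1,2}, {0}, {0,1})
  | .PPi, .PPi, .PPi => ({0,1,2}, {0,1}, {0})
  | _, _, _ => ({0}, {0}, {0})

theorem tab_wit : ∀ α β γ : RCC5Basic, γ ∈ tab α β →
    ∃ S T U : Finset (Fin 4), S.Nonempty ∧ T.Nonempty ∧ U.Nonempty ∧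
      srel S T = α ∧ srel T U = β ∧ srel S U = γ := by
  intro α β γ h
  refine ⟨(wit α β γ).1, (wit α β γ).2.1, (wit α β γ).2.2, ?_⟩
  revert h
  cases α <;> cases β <;> cases γ <;> decide

/-- From a table entry, produce actual regions realizing the triangle. -/
theorem tab_realize {α β γ : RCC5Basic} (h : γ ∈ tab α β) :
    ∃ x y z : Region, α.interp x y ∧ β.interp y z ∧ γ.interp x z := by
  obtain ⟨S, T, U, hS, hT, hU, h1, h2, h3⟩ := tab_wit α β γ h
  set e : Fin 4 ↪ ℕ := ⟨fun i => (i : ℕ), Fin.val_injective⟩ with he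
  refine ⟨mkR (S.map e) hS.map, mkR (T.map e) hT.map, mkR (U.map e) hU.map,
    ?_, ?_, ?_⟩
  · have := srel_interp (S.map e) (T.map e) hS.map hT.map
    rwa [srel_map, h1] at this
  · have := srel_interp (T.map e) (U.map e) hT.map hU.map
    rwa [srel_map, h2] at this
  · have := srel_interp (S.map e) (U.map e) hS.map hU.map
    rwa [srel_map, h3] at this

def basicOfB (sab sba o : Bool) : RCC5Basic :=
  if sab && sba then .EQ else if sab then .PP else if sba then .PPi
  else if o then .PO else .DR

def hornOk (sxy syx syz szy sxz szx oxy oyz oxz : Bool) : Bool :=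
  ((!sxy || !syz || sxz) && ((!syz || !szx || syx) && ((!szx || !sxy || szy) && ((!sxz || !szy || sxy) && ((!szy || !syx || szx) && ((!syx || !sxz || syz) && ((!oxy || !syz || oxz) && ((!oxy || !sxz || oyz) && ((!oyz || !syx || oxz) && ((!oyz || !szx || oxy) && ((!oxz || !szy || oxy) && ((!oxz || !sxy || oyz) && ((!sxy || !sxz || oyz) && ((!syx || !syz || oxz) && ((!szx || !szy || oxy) && ((!sxy || oxy) && ((!syx || oxy) && ((!syz || oyz) && ((!szy || oyz) && ((!sxz || oxz) && (!szx || oxz)))))))))))))))))))))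

theorem horn : ∀ sxy syx syz szy sxz szx oxy oyz oxz : Bool,
    hornOk sxy syx syz szy sxz szx oxy oyz oxz = true →
    basicOfB sxz szx oxz ∈ tab (basicOfB sxy syx oxy) (basicOfB syz szy oyz) := by decide

lemma basicOfB_interp (x y : Region) (s1 s2 o : Bool) (h1 : s1 = true ↔ x.1 ⊆ y.1)
    (h2 : s2 = true ↔ y.1 ⊆ x.1) (ho : o = true ↔ Region.O x y) :
    (basicOfB s1 s2 o).interp x y := by
  cases s1 <;> cases s2 <;> cases o <;>
    simp only [basicOfB, Bool.and_self, Bool.and_false, Bool.false_and, Bool.and_true,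
      Bool.true_and, if_true, if_false, Bool.false_eq_true, false_iff, true_iff,
      Bool.not_eq_true] at h1 h2 ho ⊢ <;>
    first
    | exact ho
    | exact ⟨ho, h1, h2⟩
    | exact (ho (O_symm (O_of_sub h2))).elim
    | exact ⟨h2, fun hc => h1 (by rw [hc])⟩
    | exact (ho (O_of_sub h1)).elim
    | exact ⟨h1, fun hc => h2 (by rw [hc])⟩
    | exact region_eq h1 h2

lemma impl2_bool {p q r : Prop} [Decidable p] [Decidable q] [Decidable r]
    (h : p → q → r) : (!(decide p) || !(decide q) || decide r) = true := by
  by_cases hp : p <;> by_cases hq : q <;> simp [hp, hq, h]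

lemma impl1_bool {p q : Prop} [Decidable p] [Decidable q]
    (h : p → q) : (!(decide p) || decide q) = true := by
  by_cases hp : p <;> simp [hp, h]

open Classical in
/-- Semantic completeness of the table. -/
theorem tab_complete {α β γ : RCC5Basic} {x y z : Region}
    (h1 : α.interp x y) (h2 : β.interp y z) (h3 : γ.interp x z) : γ ∈ tab α β := by
  have e1 : α = basicOfB (decide (x.1 ⊆ y.1)) (decide (y.1 ⊆ x.1)) (decide (Region.O x y)) :=
    interp_unique h1 (basicOfB_interp x y _ _ _ (by simp) (by simp) (by simp))
  have e2 : β = basicOfB (decide (y.1 ⊆ z.1)) (decide (z.1 ⊆ y.1)) (decide (Region.O y z)) :=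
    interp_unique h2 (basicOfB_interp y z _ _ _ (by simp) (by simp) (by simp))
  have e3 : γ = basicOfB (decide (x.1 ⊆ z.1)) (decide (z.1 ⊆ x.1)) (decide (Region.O x z)) :=
    interp_unique h3 (basicOfB_interp x z _ _ _ (by simp) (by simp) (by simp))
  rw [e1, e2, e3]
  apply horn
  simp only [hornOk, Bool.and_eq_true]
  refine ⟨impl2_bool ?_, impl2_bool ?_, impl2_bool ?_, impl2_bool ?_, impl2_bool ?_,
    impl2_bool ?_, impl2_bool ?_, impl2_bool ?_, impl2_bool ?_, impl2_bool ?_, impl2_bool ?_,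
    impl2_bool ?_, impl2_bool ?_, impl2_bool ?_, impl2_bool ?_, impl1_bool ?_, impl1_bool ?_,
    impl1_bool ?_, impl1_bool ?_, impl1_bool ?_, impl1_bool ?_⟩
  · exact fun h h' => h.trans h'
  · exact fun h h' => h.trans h'
  · exact fun h h' => h.trans h'
  · exact fun h h' => h.trans h'
  · exact fun h h' => h.trans h'
  · exact fun h h' => h.trans h'
  · exact fun h h' => O_mono subset_rfl h' h
  · exact fun h h' => O_mono subset_rfl h' (O_symm h)
  · exact fun h h' => O_mono h' subset_rfl h
  · exact fun h h' => O_mono h' subset_rfl (O_symm h)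
  · exact fun h h' => O_mono subset_rfl h' h
  · exact fun h h' => O_mono h' subset_rfl h
  · exact fun h h' => ⟨_, h, h'⟩
  · exact fun h h' => ⟨_, h, h'⟩
  · exact fun h h' => ⟨_, h, h'⟩
  · exact fun h => O_of_sub h
  · exact fun h => O_symm (O_of_sub h)
  · exact fun h => O_of_sub h
  · exact fun h => O_symm (O_of_sub h)
  · exact fun h => O_of_sub h
  · exact fun h => O_symm (O_of_sub h)

end WGC
namespace WGC
open RCC5Basic

/-- Table-based composition of RCC5 relations. -/
def compT (R S : RCC5Rel) : RCC5Rel := {γ | ∃ α ∈ R, ∃ β ∈ S, γ ∈ tab α β}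

/-- The semantic weak composition coincides with the table-based composition. -/
theorem comp_eq : RCC5Rel.comp = compT := by
  funext R S
  ext γ
  constructor
  · rintro ⟨x, z, hγ, y, ⟨α, hα, hαi⟩, ⟨β, hβ, hβi⟩⟩
    exact ⟨α, hα, β, hβ, tab_complete hαi hβi hγ⟩
  · rintro ⟨α, hα, β, hβ, hγ⟩
    obtain ⟨x, y, z, h1, h2, h3⟩ := tab_realize hγ
    exact ⟨x, z, h3, y, ⟨α, hα, h1⟩, ⟨β, hβ, h2⟩⟩

lemma compT_mono {R R' S S' : RCC5Rel} (hR : R ⊆ R') (hS : S ⊆ S') :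
    compT R S ⊆ compT R' S' := by
  rintro γ ⟨α, hα, β, hβ, h⟩
  exact ⟨α, hR hα, β, hS hβ, h⟩

lemma mem_compT_singleton {α β γ : RCC5Basic} : γ ∈ compT {α} {β} ↔ γ ∈ tab α β := by
  constructor
  · rintro ⟨a, ha, b, hb, h⟩
    rw [Set.mem_singleton_iff] at ha hb
    rwa [ha, hb] at h
  · intro h
    exact ⟨α, rfl, β, rfl, h⟩

theorem tab_assoc : ∀ a b c d : RCC5Basic,
    (∃ e ∈ tab a b, d ∈ tab e c) ↔ (∃ e ∈ tab b c, d ∈ tab a e) := by decide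

lemma compT_assoc (R S T : RCC5Rel) : compT (compT R S) T = compT R (compT S T) := by
  ext d
  constructor
  · rintro ⟨e, ⟨a, ha, b, hb, he⟩, c, hc, hd⟩
    obtain ⟨f, hf1, hf2⟩ := (tab_assoc a b c d).mp ⟨e, he, hd⟩
    exact ⟨a, ha, f, ⟨b, hb, c, hc, hf1⟩, hf2⟩
  · rintro ⟨a, ha, f, ⟨b, hb, c, hc, hf⟩, hd⟩
    obtain ⟨e, he1, he2⟩ := (tab_assoc a b c d).mpr ⟨f, hf, hd⟩
    exact ⟨e, ⟨a, ha, b, hb, he1⟩, c, hc, he2⟩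

theorem tab_conv : ∀ a b c : RCC5Basic, c ∈ tab a b → c.conv ∈ tab b.conv a.conv := by decide

theorem tab_rot1 : ∀ a b c : RCC5Basic, c ∈ tab a b → b ∈ tab a.conv c := by decide

theorem tab_rot2 : ∀ a b c : RCC5Basic, c ∈ tab a b → a ∈ tab c b.conv := by decide

theorem tab_eq_left : ∀ b : RCC5Basic, tab .EQ b = {b} := fun b => rfl

theorem tab_eq_right : ∀ b : RCC5Basic, tab b .EQ = {b} := by decide

theorem tab_mem_eq : ∀ a b : RCC5Basic, .EQ ∈ tab a b → b = a.conv := by decide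

theorem tab_nonempty : ∀ a b : RCC5Basic, ∃ c, c ∈ tab a b := by decide

theorem tab_self_mem : ∀ a b : RCC5Basic, b ∈ tab b .EQ ∧ b ∈ tab .EQ b := by decide

theorem tab_eq_mem_conv : ∀ b : RCC5Basic, .EQ ∈ tab b b.conv ∧ .EQ ∈ tab b.conv b := by decide

theorem tab_bbb : ∀ b : RCC5Basic, ∃ e ∈ tab b.conv b, b ∈ tab b e := by decide

lemma conv_singleton (b : RCC5Basic) : RCC5Rel.conv {b} = {b.conv} := by
  ext c
  simp only [RCC5Rel.conv, Set.mem_setOf_eq, Set.mem_singleton_iff]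
  constructor
  · intro h; rw [← conv_conv c, h]
  · intro h; rw [h, conv_conv]

lemma conv_inter (R S : RCC5Rel) : RCC5Rel.conv (R ∩ S) = RCC5Rel.conv R ∩ RCC5Rel.conv S := rfl

lemma mem_conv {b : RCC5Basic} {R : RCC5Rel} : b ∈ RCC5Rel.conv R ↔ b.conv ∈ R := Iff.rfl

lemma conv_compT (R S : RCC5Rel) :
    RCC5Rel.conv (compT R S) = compT (RCC5Rel.conv S) (RCC5Rel.conv R) := by
  ext γ
  simp only [RCC5Rel.conv, Set.mem_setOf_eq, compT]
  constructor
  · rintro ⟨α, hα, β, hβ, h⟩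
    refine ⟨β.conv, by rwa [conv_conv], α.conv, by rwa [conv_conv], ?_⟩
    have := tab_conv α β γ.conv h
    rwa [conv_conv] at this
  · rintro ⟨β', hβ', α', hα', h⟩
    exact ⟨α'.conv, hα', β'.conv, hβ', by simpa using tab_conv β' α' γ h⟩

lemma compT_EQ_left (R : RCC5Rel) : compT {.EQ} R = R := by
  ext γ
  constructor
  · rintro ⟨α, hα, β, hβ, h⟩
    rw [Set.mem_singleton_iff] at hα
    subst hα
    rw [tab_eq_left] at h
    rwa [Finset.mem_singleton.mp h]
  · intro h
    exact ⟨.EQ, rfl, γ, h, by rw [tab_eq_left]; exact Finset.mem_singleton_self γ⟩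

lemma compT_EQ_right (R : RCC5Rel) : compT R {.EQ} = R := by
  ext γ
  constructor
  · rintro ⟨α, hα, β, hβ, h⟩
    rw [Set.mem_singleton_iff] at hβ
    subst hβ
    rw [tab_eq_right] at h
    rwa [Finset.mem_singleton.mp h]
  · intro h
    exact ⟨γ, h, .EQ, rfl, by rw [tab_eq_right]; exact Finset.mem_singleton_self γ⟩

lemma subset_compT_right {R X : RCC5Rel} (h : RCC5Basic.EQ ∈ X) : R ⊆ compT R X :=
  fun γ hγ => ⟨γ, hγ, .EQ, h, by rw [tab_eq_right]; exact Finset.mem_singleton_self γ⟩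

lemma subset_compT_left {R X : RCC5Rel} (h : RCC5Basic.EQ ∈ X) : R ⊆ compT X R :=
  fun γ hγ => ⟨.EQ, h, γ, hγ, by rw [tab_eq_left]; exact Finset.mem_singleton_self γ⟩

lemma compT_nonempty {R S : RCC5Rel} (hR : R.Nonempty) (hS : S.Nonempty) :
    (compT R S).Nonempty := by
  obtain ⟨α, hα⟩ := hR
  obtain ⟨β, hβ⟩ := hS
  obtain ⟨γ, hγ⟩ := tab_nonempty α β
  exact ⟨γ, α, hα, β, hβ, hγ⟩

lemma singleton_bbb (b : RCC5Basic) : ({b} : RCC5Rel) ⊆ compT {b} (compT {b.conv} {b}) := by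
  intro γ hγ
  rw [Set.mem_singleton_iff] at hγ
  subst hγ
  obtain ⟨e, he1, he2⟩ := tab_bbb γ
  exact ⟨γ, rfl, e, mem_compT_singleton.mpr he1, he2⟩

end WGC
namespace WGC
open RCC5Basic

variable {n : ℕ}

/-- A "good" constraint matrix over `𝒮`: the invariant maintained during refinement. -/
structure GoodM (𝒮 : Set RCC5Rel) (M : Fin n → Fin n → RCC5Rel) : Prop where
  mem : ∀ i j, M i j ∈ 𝒮
  ne : ∀ i j, (M i j).Nonempty
  diag : ∀ i, M i i = {RCC5Basic.EQ}
  symm : ∀ i j, M j i = RCC5Rel.conv (M i j)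
  pc : ∀ i j k, M i j ⊆ compT (M i k) (M k j)

lemma GoodM.mem_symm {𝒮} {M : Fin n → Fin n → RCC5Rel} (hG : GoodM 𝒮 M) {i j : Fin n}
    {α : RCC5Basic} (h : α ∈ M i j) : α.conv ∈ M j i := by
  rw [hG.symm, mem_conv, conv_conv]
  exact h

lemma GoodM.eq_mem_comp {𝒮} {M : Fin n → Fin n → RCC5Rel} (hG : GoodM 𝒮 M) (i k : Fin n) :
    RCC5Basic.EQ ∈ compT (M i k) (M k i) :=
  hG.pc i i k (by rw [hG.diag]; rfl)

/-- Refining the constraint between `p` and `q` to the basic relation `b`, propagating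
once through every pair. -/
def refineM (M : Fin n → Fin n → RCC5Rel) (p q : Fin n) (b : RCC5Basic) :
    Fin n → Fin n → RCC5Rel :=
  fun i j => M i j ∩
    (compT (M i p) (compT {b} (M q j)) ∩ compT (M i q) (compT {b.conv} (M p j)))

section Refine

variable {𝒮 : Set RCC5Rel} {M : Fin n → Fin n → RCC5Rel} {p q : Fin n} {b : RCC5Basic}

lemma hcompT (h𝒮 : IsDistributiveSubalgebra 𝒮) {R S : RCC5Rel} (hR : R ∈ 𝒮) (hS : S ∈ 𝒮) :
    compT R S ∈ 𝒮 := by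
  have := h𝒮.2.2.1 R hR S hS
  rwa [comp_eq] at this

lemma hdL (h𝒮 : IsDistributiveSubalgebra 𝒮) {R T₁ T₂ : RCC5Rel} (hR : R ∈ 𝒮) (h1 : T₁ ∈ 𝒮)
    (h2 : T₂ ∈ 𝒮) (hne : (T₁ ∩ T₂).Nonempty) :
    compT R (T₁ ∩ T₂) = compT R T₁ ∩ compT R T₂ := by
  have := (h𝒮.2.2.2.2 R hR T₁ h1 T₂ h2 hne).1
  rwa [comp_eq] at this

lemma hdR (h𝒮 : IsDistributiveSubalgebra 𝒮) {R T₁ T₂ : RCC5Rel} (hR : R ∈ 𝒮) (h1 : T₁ ∈ 𝒮)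
    (h2 : T₂ ∈ 𝒮) (hne : (T₁ ∩ T₂).Nonempty) :
    compT (T₁ ∩ T₂) R = compT T₁ R ∩ compT T₂ R := by
  have := (h𝒮.2.2.2.2 R hR T₁ h1 T₂ h2 hne).2
  rwa [comp_eq] at this

lemma comp_prefix {A A' A'' X : RCC5Rel} (h : A ⊆ compT A' A'') :
    compT A X ⊆ compT A' (compT A'' X) := by
  rw [← compT_assoc]
  exact compT_mono h subset_rfl

lemma comp_suffix {A A' A'' X : RCC5Rel} (h : A ⊆ compT A' A'') :
    compT X A ⊆ compT (compT X A') A'' := by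
  rw [compT_assoc]
  exact compT_mono subset_rfl h

/-- Every entry of the refined matrix is nonempty. This is where distributivity is used. -/
lemma refineM_nonempty (h𝒮 : IsDistributiveSubalgebra 𝒮) (hG : GoodM 𝒮 M)
    (hb : b ∈ M p q) (i j : Fin n) : (refineM M p q b i j).Nonempty := by
  have hAne : ∀ i : Fin n, (M i q ∩ compT (M i p) {b}).Nonempty := by
    intro i
    obtain ⟨α, hα, τ, hτ, hbt⟩ := hG.pc p q i hb
    exact ⟨τ, hτ, α.conv, hG.mem_symm hα, b, rfl, tab_rot1 α τ b hbt⟩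
  have hAmem : ∀ i : Fin n, M i q ∩ compT (M i p) {b} ∈ 𝒮 := fun i =>
    h𝒮.2.2.2.1 _ (hG.mem i q) _ (hcompT h𝒮 (hG.mem i p) (h𝒮.1 b)) (hAne i)
  have hbA : ∀ i : Fin n, b ∈ compT (M p i) (M i q ∩ compT (M i p) {b}) := by
    intro i
    rw [hdL h𝒮 (hG.mem p i) (hG.mem i q) (hcompT h𝒮 (hG.mem i p) (h𝒮.1 b)) (hAne i)]
    refine ⟨hG.pc p q i hb, ?_⟩
    rw [← compT_assoc]
    exact subset_compT_left (hG.eq_mem_comp p i) rfl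
  obtain ⟨αm, hαm, τ, hτA, hbt⟩ := hbA i
  have hτab : τ ∈ tab αm.conv b := tab_rot1 _ _ _ hbt
  have hτC : τ ∈ compT (M i j) (M j q ∩ compT (M j p) {b}) := by
    rw [hdL h𝒮 (hG.mem i j) (hG.mem j q) (hcompT h𝒮 (hG.mem j p) (h𝒮.1 b)) (hAne j)]
    refine ⟨hG.pc i q j hτA.1, ?_⟩
    have h6 : compT (M i p) ({b} : RCC5Rel) ⊆ compT (compT (M i j) (M j p)) {b} :=
      compT_mono (hG.pc i p j) subset_rfl
    have := h6 hτA.2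
    rwa [compT_assoc] at this
  obtain ⟨γ, hγ, ρ, hρA, hτt⟩ := hτC
  have h7 : γ ∈ tab τ ρ.conv := tab_rot2 _ _ _ hτt
  refine ⟨γ, hγ, ?_, ?_⟩
  · obtain ⟨χ, hχ1, hχ2⟩ := (tab_assoc αm.conv b ρ.conv γ).mp ⟨τ, hτab, h7⟩
    exact ⟨αm.conv, hG.mem_symm hαm, χ, ⟨b, rfl, ρ.conv, hG.mem_symm hρA.1, hχ1⟩, hχ2⟩
  · obtain ⟨ν, hν, b', hb', hρt⟩ := hρA.2
    rw [Set.mem_singleton_iff] at hb'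
    rw [hb'] at hρt
    exact ⟨τ, hτA.1, ρ.conv, ⟨b.conv, rfl, ν.conv, hG.mem_symm hν, tab_conv ν b ρ hρt⟩, h7⟩

/-- The nine triangle inclusions. -/
lemma refineM_nine (hG : GoodM 𝒮 M) (hb : b ∈ M p q) (i j k : Fin n) :
    (refineM M p q b i j ⊆ compT (M i k) (M k j)) ∧
    (refineM M p q b i j ⊆ compT (M i k) (compT (M k p) (compT {b} (M q j)))) ∧
    (refineM M p q b i j ⊆ compT (M i k) (compT (M k q) (compT {b.conv} (M p j)))) ∧
    (refineM M p q b i j ⊆ compT (compT (M i p) (compT {b} (M q k))) (M k j)) ∧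
    (refineM M p q b i j ⊆
      compT (compT (M i p) (compT {b} (M q k))) (compT (M k p) (compT {b} (M q j)))) ∧
    (refineM M p q b i j ⊆
      compT (compT (M i p) (compT {b} (M q k))) (compT (M k q) (compT {b.conv} (M p j)))) ∧
    (refineM M p q b i j ⊆ compT (compT (M i q) (compT {b.conv} (M p k))) (M k j)) ∧
    (refineM M p q b i j ⊆
      compT (compT (M i q) (compT {b.conv} (M p k))) (compT (M k p) (compT {b} (M q j)))) ∧
    (refineM M p q b i j ⊆
      compT (compT (M i q) (compT {b.conv} (M p k))) (compT (M k q) (compT {b.conv} (M p j)))) := by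
  have hsubM : refineM M p q b i j ⊆ M i j := fun γ h => h.1
  have hsubU : refineM M p q b i j ⊆ compT (M i p) (compT {b} (M q j)) := fun γ h => h.2.1
  have hsubV : refineM M p q b i j ⊆ compT (M i q) (compT {b.conv} (M p j)) := fun γ h => h.2.2
  have hbconv : ({b.conv} : RCC5Rel) ⊆ M q p := by
    intro γ hγ
    rw [Set.mem_singleton_iff] at hγ
    subst hγ
    exact hG.mem_symm hb
  have hbM : ({b} : RCC5Rel) ⊆ M p q := by
    intro γ hγ
    rw [Set.mem_singleton_iff] at hγ
    subst hγ
    exact hb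
  refine ⟨?_, ?_, ?_, ?_, ?_, ?_, ?_, ?_, ?_⟩
  -- 1 : M ⋄ M
  · exact fun γ h => hG.pc i j k (hsubM h)
  -- 2 : M ⋄ U
  · exact hsubU.trans (comp_prefix (hG.pc i p k))
  -- 3 : M ⋄ V
  · exact hsubV.trans (comp_prefix (hG.pc i q k))
  -- 4 : U ⋄ M
  · refine hsubU.trans ?_
    have h1 : compT {b} (M q j) ⊆ compT (compT {b} (M q k)) (M k j) :=
      comp_suffix (hG.pc q j k)
    calc compT (M i p) (compT {b} (M q j))
        ⊆ compT (M i p) (compT (compT {b} (M q k)) (M k j)) := compT_mono subset_rfl h1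
      _ = compT (compT (M i p) (compT {b} (M q k))) (M k j) := by
          simp only [compT_assoc]
  -- 5 : U ⋄ U
  · refine hsubU.trans ?_
    have h1 : ({b} : RCC5Rel) ⊆
        compT {b} (compT (compT (M q k) (M k p)) {b}) := by
      refine (singleton_bbb b).trans (compT_mono subset_rfl (compT_mono ?_ subset_rfl))
      exact hbconv.trans (hG.pc q p k)
    calc compT (M i p) (compT {b} (M q j))
        ⊆ compT (M i p) (compT (compT {b} (compT (compT (M q k) (M k p)) {b})) (M q j)) :=
          compT_mono subset_rfl (compT_mono h1 subset_rfl)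
      _ = compT (compT (M i p) (compT {b} (M q k))) (compT (M k p) (compT {b} (M q j))) := by
          simp only [compT_assoc]
  -- 6 : U ⋄ V
  · refine hsubM.trans ?_
    have hEQ : RCC5Basic.EQ ∈
        compT {b} (compT (compT (M q k) (M k q)) {b.conv}) := by
      refine ⟨b, rfl, b.conv, subset_compT_left (hG.eq_mem_comp q k) rfl, ?_⟩
      exact (tab_eq_mem_conv b).1
    calc M i j ⊆ compT (M i p) (M p j) := hG.pc i j p
      _ ⊆ compT (M i p)
            (compT (compT {b} (compT (compT (M q k) (M k q)) {b.conv})) (M p j)) :=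
          compT_mono subset_rfl (subset_compT_left hEQ)
      _ = compT (compT (M i p) (compT {b} (M q k))) (compT (M k q) (compT {b.conv} (M p j))) := by
          simp only [compT_assoc]
  -- 7 : V ⋄ M
  · refine hsubV.trans ?_
    have h1 : compT {b.conv} (M p j) ⊆ compT (compT {b.conv} (M p k)) (M k j) :=
      comp_suffix (hG.pc p j k)
    calc compT (M i q) (compT {b.conv} (M p j))
        ⊆ compT (M i q) (compT (compT {b.conv} (M p k)) (M k j)) := compT_mono subset_rfl h1
      _ = compT (compT (M i q) (compT {b.conv} (M p k))) (M k j) := by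
          simp only [compT_assoc]
  -- 8 : V ⋄ U
  · refine hsubM.trans ?_
    have hEQ : RCC5Basic.EQ ∈
        compT {b.conv} (compT (compT (M p k) (M k p)) {b}) := by
      refine ⟨b.conv, rfl, b, subset_compT_left (hG.eq_mem_comp p k) rfl, ?_⟩
      exact (tab_eq_mem_conv b).2
    calc M i j ⊆ compT (M i q) (M q j) := hG.pc i j q
      _ ⊆ compT (M i q)
            (compT (compT {b.conv} (compT (compT (M p k) (M k p)) {b})) (M q j)) :=
          compT_mono subset_rfl (subset_compT_left hEQ)
      _ = compT (compT (M i q) (compT {b.conv} (M p k))) (compT (M k p) (compT {b} (M q j))) := by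
          simp only [compT_assoc]
  -- 9 : V ⋄ V
  · refine hsubV.trans ?_
    have h1 : ({b.conv} : RCC5Rel) ⊆
        compT {b.conv} (compT (compT (M p k) (M k q)) {b.conv}) := by
      have := singleton_bbb b.conv
      rw [conv_conv] at this
      refine this.trans (compT_mono subset_rfl (compT_mono ?_ subset_rfl))
      exact hbM.trans (hG.pc p q k)
    calc compT (M i q) (compT {b.conv} (M p j))
        ⊆ compT (M i q)
            (compT (compT {b.conv} (compT (compT (M p k) (M k q)) {b.conv})) (M p j)) :=
          compT_mono subset_rfl (compT_mono h1 subset_rfl)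
      _ = compT (compT (M i q) (compT {b.conv} (M p k)))
            (compT (M k q) (compT {b.conv} (M p j))) := by
          simp only [compT_assoc]

/-- The key lemma: one refinement step preserves goodness. -/
theorem refineM_good (h𝒮 : IsDistributiveSubalgebra 𝒮) (hG : GoodM 𝒮 M) (hb : b ∈ M p q) :
    GoodM 𝒮 (refineM M p q b) ∧ (∀ i j, refineM M p q b i j ⊆ M i j) ∧
      refineM M p q b p q = {b} := by
  have hne := refineM_nonempty h𝒮 hG hb
  have hsub : ∀ i j, refineM M p q b i j ⊆ M i j := fun i j γ h => h.1
  have hU𝒮 : ∀ i j, compT (M i p) (compT {b} (M q j)) ∈ 𝒮 := fun i j =>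
    hcompT h𝒮 (hG.mem i p) (hcompT h𝒮 (h𝒮.1 b) (hG.mem q j))
  have hV𝒮 : ∀ i j, compT (M i q) (compT {b.conv} (M p j)) ∈ 𝒮 := fun i j =>
    hcompT h𝒮 (hG.mem i q) (hcompT h𝒮 (h𝒮.1 b.conv) (hG.mem p j))
  have hUVne : ∀ i j, (compT (M i p) (compT {b} (M q j)) ∩
      compT (M i q) (compT {b.conv} (M p j))).Nonempty := by
    intro i j
    obtain ⟨γ, hγ⟩ := hne i j
    exact ⟨γ, hγ.2⟩
  have hUV𝒮 : ∀ i j, (compT (M i p) (compT {b} (M q j)) ∩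
      compT (M i q) (compT {b.conv} (M p j))) ∈ 𝒮 := fun i j =>
    h𝒮.2.2.2.1 _ (hU𝒮 i j) _ (hV𝒮 i j) (hUVne i j)
  have hR𝒮 : ∀ i j, refineM M p q b i j ∈ 𝒮 := fun i j =>
    h𝒮.2.2.2.1 _ (hG.mem i j) _ (hUV𝒮 i j) (hne i j)
  refine ⟨⟨hR𝒮, hne, ?_, ?_, ?_⟩, hsub, ?_⟩
  · -- diagonal
    intro i
    apply Set.Subset.antisymm
    · exact (hsub i i).trans (hG.diag i).le
    · obtain ⟨γ, hγ⟩ := hne i i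
      have : γ ∈ ({RCC5Basic.EQ} : RCC5Rel) := (hG.diag i) ▸ (hsub i i hγ)
      rw [Set.mem_singleton_iff] at this
      subst this
      intro x hx
      rwa [Set.mem_singleton_iff.mp hx]
  · -- symmetry
    intro i j
    show M j i ∩
        (compT (M j p) (compT ({b} : RCC5Rel) (M q i)) ∩
         compT (M j q) (compT ({b.conv} : RCC5Rel) (M p i))) =
      RCC5Rel.conv (M i j ∩
        (compT (M i p) (compT ({b} : RCC5Rel) (M q j)) ∩
         compT (M i q) (compT ({b.conv} : RCC5Rel) (M p j))))
    simp only [conv_inter, conv_compT, conv_singleton, conv_conv, compT_assoc, ← hG.symm]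
    rw [Set.inter_comm (compT (M j q) (compT {b.conv} (M p i)))
      (compT (M j p) (compT {b} (M q i)))]
  · -- path consistency
    intro i j k
    obtain ⟨c1, c2, c3, c4, c5, c6, c7, c8, c9⟩ := refineM_nine hG hb i j k
    intro γ hγ
    have hrw : refineM M p q b i k = M i k ∩
        (compT (M i p) (compT {b} (M q k)) ∩ compT (M i q) (compT {b.conv} (M p k))) := rfl
    have hrw2 : refineM M p q b k j = M k j ∩
        (compT (M k p) (compT {b} (M q j)) ∩ compT (M k q) (compT {b.conv} (M p j))) := rfl
    have e1 : compT (refineM M p q b i k) (refineM M p q b k j) =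
        compT (M i k) (refineM M p q b k j) ∩
        (compT (compT (M i p) (compT {b} (M q k))) (refineM M p q b k j) ∩
         compT (compT (M i q) (compT {b.conv} (M p k))) (refineM M p q b k j)) := by
      rw [hrw, hdR h𝒮 (hR𝒮 k j) (hG.mem i k) (hUV𝒮 i k) (hne i k),
        hdR h𝒮 (hR𝒮 k j) (hU𝒮 i k) (hV𝒮 i k) (hUVne i k)]
    have e2 : ∀ X : RCC5Rel, X ∈ 𝒮 → compT X (refineM M p q b k j) =
        compT X (M k j) ∩
        (compT X (compT (M k p) (compT {b} (M q j))) ∩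
         compT X (compT (M k q) (compT {b.conv} (M p j)))) := by
      intro X hX
      rw [hrw2, hdL h𝒮 hX (hG.mem k j) (hUV𝒮 k j) (hne k j),
        hdL h𝒮 hX (hU𝒮 k j) (hV𝒮 k j) (hUVne k j)]
    rw [e1, e2 _ (hG.mem i k), e2 _ (hU𝒮 i k), e2 _ (hV𝒮 i k)]
    exact ⟨⟨c1 hγ, c2 hγ, c3 hγ⟩, ⟨c4 hγ, c5 hγ, c6 hγ⟩, ⟨c7 hγ, c8 hγ, c9 hγ⟩⟩
  · -- value at (p, q)
    have hbM : ({b} : RCC5Rel) ⊆ M p q := Set.singleton_subset_iff.mpr hb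
    apply Set.Subset.antisymm
    · intro γ hγ
      have h1 : γ ∈ compT (M p p) (compT {b} (M q q)) := hγ.2.1
      rw [hG.diag p, hG.diag q, compT_EQ_left, compT_EQ_right] at h1
      exact h1
    · intro γ hγ
      rw [Set.mem_singleton_iff] at hγ
      subst hγ
      refine ⟨hb, ?_, ?_⟩
      · rw [hG.diag p, hG.diag q, compT_EQ_left, compT_EQ_right]
        rfl
      · exact ((singleton_bbb γ).trans (compT_mono hbM (compT_mono subset_rfl hbM))) rfl

end Refine
end WGC
namespace WGC
open RCC5Basic

variable {n : ℕ}

theorem tab_trans : ∀ a b c : RCC5Basic, (a = .PP ∨ a = .EQ) → (b = .PP ∨ b = .EQ) →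
    c ∈ tab a b → (c = .PP ∨ c = .EQ) := by decide

theorem tab_F1 : ∀ a b c : RCC5Basic, (a = .PPi ∨ a = .EQ) → (b = .PP ∨ b = .EQ) →
    c ∈ tab a b → c ≠ .DR := by decide

theorem tab_F2 : ∀ a c : RCC5Basic, (a = .PPi ∨ a = .EQ) → c ∈ tab a .PO → c ≠ .DR := by decide

theorem tab_F3 : ∀ c d e : RCC5Basic, c ≠ .DR → (d = .PP ∨ d = .EQ) → e ∈ tab c d →
    e ≠ .DR := by decide

theorem conv_pre : ∀ a : RCC5Basic, (a = .PP ∨ a = .EQ) → (a.conv = .PPi ∨ a.conv = .EQ) := by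
  decide

section Atomic

variable (σ : Fin n → Fin n → RCC5Basic)

/-- `pre σ k i` : the variable `k` is interpreted as a part of `i`. -/
def pre (k i : Fin n) : Prop := σ k i = .PP ∨ σ k i = .EQ

instance (k i : Fin n) : Decidable (pre σ k i) := by unfold pre; infer_instance

/-- Membership predicate for the canonical finite-set model. -/
def apred (i : Fin n) : Fin n ⊕ Fin n × Fin n → Prop
  | Sum.inl k => pre σ k i
  | Sum.inr (k, l) => σ k l = .PO ∧ (pre σ k i ∨ pre σ l i)

instance (i : Fin n) : DecidablePred (apred σ i) := fun t =>
  match t with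
  | Sum.inl k => (inferInstance : Decidable (pre σ k i))
  | Sum.inr (k, l) =>
      (inferInstance : Decidable (σ k l = .PO ∧ (pre σ k i ∨ pre σ l i)))

/-- The canonical finite-set model of an atomic, table-closed matrix. -/
def amodel (i : Fin n) : Finset (Fin n ⊕ Fin n × Fin n) :=
  Finset.univ.filter (apred σ i)

variable {σ}
variable (hdiag : ∀ i, σ i i = .EQ) (hconv : ∀ i j, σ j i = (σ i j).conv)
  (hcl : ∀ i j k, σ i j ∈ tab (σ i k) (σ k j))

lemma mem_amodel_inl {k i : Fin n} : Sum.inl k ∈ amodel σ i ↔ pre σ k i := by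
  simp [amodel, apred]

lemma mem_amodel_inr {k l i : Fin n} :
    Sum.inr (k, l) ∈ amodel σ i ↔ σ k l = .PO ∧ (pre σ k i ∨ pre σ l i) := by
  simp [amodel, apred]

include hdiag in
lemma pre_refl (i : Fin n) : pre σ i i := Or.inr (hdiag i)

include hcl in
lemma pre_trans {k l i : Fin n} (h1 : pre σ k l) (h2 : pre σ l i) : pre σ k i :=
  tab_trans _ _ _ h1 h2 (hcl k i l)

include hcl in
lemma amodel_mono {i j : Fin n} (hij : pre σ i j) : amodel σ i ⊆ amodel σ j := by
  intro t ht
  match t with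
  | Sum.inl k =>
    rw [mem_amodel_inl] at ht ⊢
    exact pre_trans hcl ht hij
  | Sum.inr (k, l) =>
    rw [mem_amodel_inr] at ht ⊢
    exact ⟨ht.1, ht.2.imp (fun h => pre_trans hcl h hij) (fun h => pre_trans hcl h hij)⟩

include hcl hconv in
lemma amodel_L1 {k i j : Fin n} (h1 : pre σ k i) (h2 : pre σ k j) : σ i j ≠ .DR := by
  have h3 : σ i k = (σ k i).conv := hconv k i
  refine tab_F1 (σ i k) (σ k j) (σ i j) ?_ h2 (hcl i j k)
  rw [h3]
  exact conv_pre _ h1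

include hcl hconv in
lemma amodel_L2 {k l i : Fin n} (h1 : pre σ k i) (hPO : σ k l = .PO) : σ i l ≠ .DR := by
  have h3 : σ i k = (σ k i).conv := hconv k i
  have := hcl i l k
  rw [hPO] at this
  refine tab_F2 (σ i k) (σ i l) ?_ this
  rw [h3]
  exact conv_pre _ h1

include hcl in
lemma amodel_L3 {l i j : Fin n} (h1 : σ i l ≠ .DR) (h2 : pre σ l j) : σ i j ≠ .DR :=
  tab_F3 (σ i l) (σ l j) (σ i j) h1 h2 (hcl i j l)

include hcl hconv in
lemma amodel_DR {i j : Fin n} (hDR : σ i j = .DR) (t : Fin n ⊕ Fin n × Fin n)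
    (hi : t ∈ amodel σ i) (hj : t ∈ amodel σ j) : False := by
  match t with
  | Sum.inl k =>
    rw [mem_amodel_inl] at hi hj
    exact amodel_L1 hconv hcl hi hj hDR
  | Sum.inr (k, l) =>
    rw [mem_amodel_inr] at hi hj
    obtain ⟨hPO, hi⟩ := hi
    obtain ⟨-, hj⟩ := hj
    have hPO' : σ l k = .PO := by rw [hconv k l, hPO]; rfl
    rcases hi with hi | hi <;> rcases hj with hj | hj
    · exact amodel_L1 hconv hcl hi hj hDR
    · exact amodel_L3 hcl (amodel_L2 hconv hcl hi hPO) hj hDR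
    · exact amodel_L3 hcl (amodel_L2 hconv hcl hi hPO') hj hDR
    · exact amodel_L1 hconv hcl hi hj hDR

include hdiag in
lemma amodel_self_mem (i : Fin n) : Sum.inl i ∈ amodel σ i :=
  mem_amodel_inl.mpr (pre_refl hdiag i)

lemma amodel_inl_not_mem {i j : Fin n} (h : ¬ pre σ i j) : Sum.inl i ∉ amodel σ j :=
  fun hc => h (mem_amodel_inl.mp hc)

include hdiag hconv hcl in
/-- Main construction: every atomic table-closed constraint matrix has a region model. -/
theorem atomic_model : ∃ a : Fin n → Region, ∀ i j, (σ i j).interp (a i) (a j) := by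
  classical
  set e : (Fin n ⊕ Fin n × Fin n) ↪ ℕ := ⟨Encodable.encode, Encodable.encode_injective⟩ with he
  have hne : ∀ i, ((amodel σ i).map e).Nonempty :=
    fun i => Finset.Nonempty.map ⟨Sum.inl i, amodel_self_mem hdiag i⟩
  refine ⟨fun i => mkR ((amodel σ i).map e) (hne i), fun i j => ?_⟩
  have hsubm : ∀ {i j : Fin n}, pre σ i j →
      ((amodel σ i).map e : Finset ℕ) ⊆ (amodel σ j).map e :=
    fun hij => Finset.map_subset_map.mpr (amodel_mono hcl hij)
  have hpre_of_sub : ∀ {i j : Fin n},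
      (((amodel σ i).map e : Finset ℕ) ⊆ (amodel σ j).map e) → pre σ i j := by
    intro i j h
    have h2 : amodel σ i ⊆ amodel σ j := Finset.map_subset_map.mp h
    exact mem_amodel_inl.mp (h2 (amodel_self_mem hdiag i))
  rcases hb : σ i j with _ | _ | _ | _ | _
  · -- DR
    intro hO
    obtain ⟨z, hz1, hz2⟩ := hO
    obtain ⟨pt, hpt⟩ := z.2.1
    have h3 : (((amodel σ i).map e) ∩ ((amodel σ j).map e) : Finset ℕ).Nonempty := by
      have := regionOf_inter.mp ⟨pt, hz1 hpt, hz2 hpt⟩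
      exact this
    rw [← Finset.map_inter] at h3
    obtain ⟨t, ht⟩ := Finset.map_nonempty.mp h3
    rw [Finset.mem_inter] at ht
    exact amodel_DR hconv hcl hb t ht.1 ht.2
  · -- PO
    refine ⟨?_, ?_, ?_⟩
    · apply mkR_O_iff.mpr
      rw [← Finset.map_inter]
      apply Finset.Nonempty.map
      refine ⟨Sum.inr (i, j), Finset.mem_inter.mpr ⟨?_, ?_⟩⟩
      · exact mem_amodel_inr.mpr ⟨hb, Or.inl (pre_refl hdiag i)⟩
      · exact mem_amodel_inr.mpr ⟨hb, Or.inr (pre_refl hdiag j)⟩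
    · intro hc
      have := hpre_of_sub (mkR_sub_iff.mp hc)
      rcases this with h | h <;> rw [hb] at h <;> exact RCC5Basic.noConfusion h
    · intro hc
      have := hpre_of_sub (mkR_sub_iff.mp hc)
      have h4 : σ j i = .PO := by rw [hconv i j, hb]; rfl
      rcases this with h | h <;> rw [h4] at h <;> exact RCC5Basic.noConfusion h
  · -- PP
    refine ⟨mkR_sub_iff.mpr (hsubm (Or.inl hb)), ?_⟩
    intro hc
    have h1 : ((amodel σ j).map e : Finset ℕ) ⊆ (amodel σ i).map e :=
      (mkR_eq_iff.mp hc).ge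
    have := hpre_of_sub h1
    have h4 : σ j i = .PPi := by rw [hconv i j, hb]; rfl
    rcases this with h | h <;> rw [h4] at h <;> exact RCC5Basic.noConfusion h
  · -- PPi
    have h4 : σ j i = .PP := by rw [hconv i j, hb]; rfl
    refine ⟨mkR_sub_iff.mpr (hsubm (Or.inl h4)), ?_⟩
    intro hc
    have h1 : ((amodel σ i).map e : Finset ℕ) ⊆ (amodel σ j).map e :=
      (mkR_eq_iff.mp hc).le
    have := hpre_of_sub h1
    rcases this with h | h <;> rw [hb] at h <;> exact RCC5Basic.noConfusion h
  · -- EQ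
    have h4 : σ j i = .EQ := by rw [hconv i j, hb]; rfl
    exact region_eq (mkR_sub_iff.mpr (hsubm (Or.inr hb))) (mkR_sub_iff.mpr (hsubm (Or.inr h4)))

end Atomic
end WGC
namespace WGC
open RCC5Basic

variable {n : ℕ}

noncomputable def msr (M : Fin n → Fin n → RCC5Rel) : ℕ :=
  ∑ x : Fin n × Fin n, (M x.1 x.2).ncard

lemma msr_lt {M M' : Fin n → Fin n → RCC5Rel} (hsub : ∀ i j, M' i j ⊆ M i j)
    {p q : Fin n} (hne : M' p q ≠ M p q) : msr M' < msr M := by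
  apply Finset.sum_lt_sum
  · intro x _
    exact Set.ncard_le_ncard (hsub x.1 x.2) (Set.toFinite _)
  · exact ⟨(p, q), Finset.mem_univ _,
      Set.ncard_lt_ncard (Set.ssubset_iff_subset_ne.mpr ⟨hsub p q, hne⟩) (Set.toFinite _)⟩

theorem extend (𝒮 : Set RCC5Rel) (h𝒮 : IsDistributiveSubalgebra 𝒮)
    (Γ : RCC5Network n) (V : Set (Fin n)) (s : Fin n → Fin n → RCC5Basic)
    (a : Fin n → Region) (hmod : ∀ i ∈ V, ∀ j ∈ V, (s i j).interp (a i) (a j)) :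
    ∀ N : ℕ, ∀ M : Fin n → Fin n → RCC5Rel, msr M ≤ N → GoodM 𝒮 M →
    (∀ i j, M i j ⊆ Γ.rel i j) → (∀ i ∈ V, ∀ j ∈ V, s i j ∈ M i j) →
    ∃ s' : Fin n → Fin n → RCC5Basic,
      (∀ i j, s' i j ∈ Γ.rel i j) ∧ (∀ i j, s' j i = (s' i j).conv) ∧
      (∀ i, s' i i = .EQ) ∧ (∃ a' : Fin n → Region, ∀ i j, (s' i j).interp (a' i) (a' j)) ∧
      (∀ i ∈ V, ∀ j ∈ V, s' i j = s i j) := by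
  intro N
  induction N using Nat.strong_induction_on with
  | _ N ih =>
    intro M hle hG hsub hinv
    classical
    by_cases hsing : ∀ i j, ∃ bb : RCC5Basic, M i j = {bb}
    · -- all entries are singletons: extract the scenario and build a model
      set σ : Fin n → Fin n → RCC5Basic := fun i j => (hsing i j).choose with hσ
      have hspec : ∀ i j, M i j = {σ i j} := fun i j => (hsing i j).choose_spec
      have hmemσ : ∀ i j, σ i j ∈ M i j := fun i j => by rw [hspec]; rfl
      have hcl : ∀ i j k, σ i j ∈ tab (σ i k) (σ k j) := by
        intro i j k
        obtain ⟨α, hα, β, hβ, h⟩ := hG.pc i j k (hmemσ i j)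
        rw [hspec i k, Set.mem_singleton_iff] at hα
        rw [hspec k j, Set.mem_singleton_iff] at hβ
        rwa [hα, hβ] at h
      have hdiagσ : ∀ i, σ i i = .EQ := by
        intro i
        have h1 := hmemσ i i
        rw [hG.diag i, Set.mem_singleton_iff] at h1
        exact h1
      have hconvσ : ∀ i j, σ j i = (σ i j).conv := by
        intro i j
        obtain ⟨α, hα, β, hβ, h⟩ := hG.eq_mem_comp i j
        rw [hspec i j, Set.mem_singleton_iff] at hα
        rw [hspec j i, Set.mem_singleton_iff] at hβ
        rw [hα, hβ] at h
        exact tab_mem_eq _ _ h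
      refine ⟨σ, fun i j => hsub i j (hmemσ i j), hconvσ, hdiagσ,
        atomic_model hdiagσ hconvσ hcl, ?_⟩
      intro i hi j hj
      have h1 := hinv i hi j hj
      rw [hspec i j, Set.mem_singleton_iff] at h1
      exact h1.symm
    · by_cases hVs : ∃ p ∈ V, ∃ q ∈ V, ∀ bb : RCC5Basic, M p q ≠ {bb}
      · -- refine an edge inside V using the scenario value
        obtain ⟨p, hp, q, hq, hpq⟩ := hVs
        have hb : s p q ∈ M p q := hinv p hp q hq
        obtain ⟨hG', hsub', hval⟩ := refineM_good h𝒮 hG hb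
        have hlt : msr (refineM M p q (s p q)) < msr M :=
          msr_lt hsub' (p := p) (q := q) (by rw [hval]; exact fun h => hpq (s p q) h.symm)
        have hinv' : ∀ i ∈ V, ∀ j ∈ V, s i j ∈ refineM M p q (s p q) i j := by
          intro i hi j hj
          have t1 : s p j ∈ tab (s p q) (s q j) :=
            tab_complete (hmod p hp q hq) (hmod q hq j hj) (hmod p hp j hj)
          have t2 : s i j ∈ tab (s i p) (s p j) :=
            tab_complete (hmod i hi p hp) (hmod p hp j hj) (hmod i hi j hj)
          have hqp : (s p q).conv = s q p :=
            interp_unique (interp_conv (hmod p hp q hq)) (hmod q hq p hp)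
          have t3 : s q j ∈ tab (s q p) (s p j) :=
            tab_complete (hmod q hq p hp) (hmod p hp j hj) (hmod q hq j hj)
          have t4 : s i j ∈ tab (s i q) (s q j) :=
            tab_complete (hmod i hi q hq) (hmod q hq j hj) (hmod i hi j hj)
          refine ⟨hinv i hi j hj, ?_, ?_⟩
          · exact ⟨s i p, hinv i hi p hp, s p j,
              ⟨s p q, rfl, s q j, hinv q hq j hj, t1⟩, t2⟩
          · refine ⟨s i q, hinv i hi q hq, s q j,
              ⟨(s p q).conv, rfl, s p j, hinv p hp j hj, ?_⟩, t4⟩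
            rw [hqp]
            exact t3
        exact ih (msr (refineM M p q (s p q))) (lt_of_lt_of_le hlt hle) _ le_rfl hG'
          (fun i j => (hsub' i j).trans (hsub i j)) hinv'
      · -- refine any non-singleton edge; all edges inside V are already singletons
        push_neg at hsing hVs
        obtain ⟨p, q, hpq⟩ := hsing
        obtain ⟨b, hb⟩ := hG.ne p q
        obtain ⟨hG', hsub', hval⟩ := refineM_good h𝒮 hG hb
        have hlt : msr (refineM M p q b) < msr M :=
          msr_lt hsub' (p := p) (q := q) (by rw [hval]; exact fun h => hpq b h.symm)
        have hinv' : ∀ i ∈ V, ∀ j ∈ V, s i j ∈ refineM M p q b i j := by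
          intro i hi j hj
          obtain ⟨bb, hbb⟩ := hVs i hi j hj
          have h1 : s i j ∈ M i j := hinv i hi j hj
          rw [hbb, Set.mem_singleton_iff] at h1
          have h3 : refineM M p q b i j ⊆ {s i j} := by
            rw [← h1] at hbb
            rw [← hbb]
            exact hsub' i j
          obtain ⟨γ, hγ⟩ := refineM_nonempty h𝒮 hG hb i j
          have h4 := h3 hγ
          rw [Set.mem_singleton_iff] at h4
          rwa [← h4]
        exact ih (msr (refineM M p q b)) (lt_of_lt_of_le hlt hle) _ le_rfl hG'
          (fun i j => (hsub' i j).trans (hsub i j)) hinv'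

end WGC

/-- A path-consistent RCC5 network over a distributive subalgebra is weakly globally
consistent. -/
theorem path_consistent_over_distributive_is_wgc {n : ℕ} (𝒮 : Set RCC5Rel)
    (h𝒮 : IsDistributiveSubalgebra 𝒮) (Γ : RCC5Network n) (hover : Γ.Over 𝒮)
    (hpc : Γ.PathConsistent) :
    Γ.WeaklyGloballyConsistent := by
  intro V hV s hscen hcons
  obtain ⟨a, ha⟩ := hcons
  have hG : WGC.GoodM 𝒮 Γ.rel :=
    ⟨hover, fun i j => (hpc i j i).1, Γ.diag, Γ.conv_rel,
     fun i j k => by have := (hpc i j k).2; rwa [WGC.comp_eq] at this⟩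
  obtain ⟨s', h1, h2, h3, ⟨a', ha'⟩, h5⟩ :=
    WGC.extend 𝒮 h𝒮 Γ V s a ha (WGC.msr Γ.rel) Γ.rel le_rfl hG
      (fun i j => subset_rfl) (fun i hi j hj => hscen.1 i hi j hj)
  exact ⟨s', ⟨fun i _ j _ => h1 i j, fun i _ j _ => h2 i j, fun i _ => h3 i⟩,
    ⟨a', fun i _ j _ => ha' i j⟩, h5⟩
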